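/- arXiv:1607.00264 — 4 statements merged into one kernel-verified Lean document; each statement's English description precedes it below -/
import Mathlib

section
/- For a nonzero polynomial f ∈ K[x₁,…,xₙ] and any v ∈ ℕⁿ, the set {γ ∈ Kⁿ : v_γ(f) ≥_lex v} is an algebraic subset of Kⁿ (i.e., it is the common zero set of a family of polynomials in γ). In particular, the Lazard valuation is upper semicontinuous in the Zariski topology. -/
open MvPolynomial

/-!
Expand `f` about a generic point: substituting `xᵢ ↦ xᵢ + C αᵢ`, where the `αᵢ` are themselves
variables of the coefficient ring, yields the Taylor coefficients `c_{w,α}` as polynomials in `α`,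
and evaluating them at `γ` gives the expansion of `f` about `γ`. That expansion is nonzero because
the shift is invertible, so `v_γ(f) ≥ v` exactly when `c_{w,γ} = 0` for every `w <_lex v`: the
superlevel set is the common zero set of the `c_{w,α}` with `w <_lex v`.
-/

/-- The Lazard valuation of a polynomial `f` at a point `α`: the lexicographically
least exponent vector occurring in the expansion of `f` about `α`. -/
noncomputable def lazardVal {K : Type*} [CommRing K] {n : ℕ}
    (α : Fin n → K) (f : MvPolynomial (Fin n) K) : Lex (Fin n →₀ ℕ) :=
  (((MvPolynomial.bind₁ (fun i => X i + C (α i)) f).support.image toLex).min).untopD (toLex 0)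

namespace MvPolynomial

variable {σ R : Type*} [CommRing R]

theorem bind₁_X_add_C_injective (γ : σ → R) :
    Function.Injective (bind₁ (fun i => X i + C (γ i) : σ → MvPolynomial σ R)) :=
  Function.LeftInverse.injective (g := bind₁ fun i => X i - C (γ i)) fun f => by
    simp [bind₁_bind₁]

noncomputable def taylorCoeffPoly (f : MvPolynomial σ R) (w : σ →₀ ℕ) : MvPolynomial σ R :=
  coeff w (bind₁ (fun i => X i + C (X i)) (map C f))

theorem eval_taylorCoeffPoly (γ : σ → R) (f : MvPolynomial σ R) (w : σ →₀ ℕ) :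
    eval γ (taylorCoeffPoly f w) = coeff w (bind₁ (fun i => X i + C (γ i)) f) := by
  rw [taylorCoeffPoly, ← coeff_map, map_bind₁, map_map]
  simp [show (eval γ).comp (C (σ := σ)) = RingHom.id R from by ext; simp, map_id]

end MvPolynomial

theorem le_lazardVal_iff {K : Type*} [CommRing K] {n : ℕ} {f : MvPolynomial (Fin n) K}
    (hf : f ≠ 0) (γ : Fin n → K) (v : Fin n →₀ ℕ) :
    toLex v ≤ lazardVal γ f ↔
      ∀ w, toLex w < toLex v → coeff w (bind₁ (fun i => X i + C (γ i)) f) = 0 := by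
  have hne : ((bind₁ (fun i => X i + C (γ i)) f).support.image toLex).Nonempty :=
    Finset.image_nonempty.2 <| support_nonempty.2 <|
      (map_ne_zero_iff _ (bind₁_X_add_C_injective γ)).2 hf
  rw [lazardVal, WithTop.le_untopD_iff (fun h => absurd (Finset.min_eq_top.1 h) hne.ne_empty),
    Finset.le_min_iff, Finset.forall_mem_image]
  refine forall_congr' fun w => ?_
  rw [mem_support_iff, ← not_lt, WithTop.coe_lt_coe]
  tauto

/-- Upper semicontinuity of the Lazard valuation: for a nonzero polynomial `f` and
any `v ∈ ℕⁿ`, the set `{γ | v_γ(f) ≥_lex v}` is an algebraic subset of `Kⁿ`, i.e. the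
common zero set of a family of polynomials. -/
theorem lazardVal_superlevel_set_is_algebraic {K : Type*} [Field K] {n : ℕ}
    (f : MvPolynomial (Fin n) K) (hf : f ≠ 0) (v : Fin n →₀ ℕ) :
    ∃ P : Set (MvPolynomial (Fin n) K),
      {γ : Fin n → K | toLex v ≤ lazardVal γ f} =
      {γ : Fin n → K | ∀ p ∈ P, MvPolynomial.eval γ p = 0} := by
  refine ⟨taylorCoeffPoly f '' {w | toLex w < toLex v}, ?_⟩
  ext γ
  simp only [Set.mem_ofPred_eq, le_lazardVal_iff hf, Set.forall_mem_image, eval_taylorCoeffPoly]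
end

section
/- Let f(x,y) ∈ K[x,y] (K = ℝ or ℂ) be primitive of positive degree in y and squarefree. Then for all but finitely many points (α,β) ∈ K² on the curve f(x,y) = 0, the Lazard valuation v_{(α,β)}(f) equals (0,1). -/
open MvPolynomial

/-- `f`, viewed as a polynomial in the variable `y = x₁` over `K[x]` (`x = x₀`). -/
noncomputable def asPolyInY {K : Type*} [CommRing K] (f : MvPolynomial (Fin 2) K) :
    Polynomial (MvPolynomial (Fin 1) K) :=
  MvPolynomial.finSuccEquiv K 1 (MvPolynomial.rename (Equiv.swap 0 1) f)

/-!
At a point of the curve where `∂f/∂y ≠ 0`, the expansion of `f` about the point has no constant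
term and a nonzero `y`-term, and every exponent lexicographically below `(0,1)` is `(0,0)`; so the
valuation is `(0,1)`. The points where `f = ∂f/∂y = 0` are finite in number. Viewed in `K[x][y]`,
`f` is primitive and squarefree, so by Gauss's lemma it stays squarefree, hence separable, over
`K(x)` (characteristic zero). Therefore the resultant `r = res_y(f, ∂f/∂y) ∈ K[x]` is nonzero, and
it lies in the ideal `(f, ∂f/∂y)`. At such a point `x` is one of the finitely many roots of `r`, and
for each root `α` the polynomial `f(α, y)` is nonzero by primitivity, so it has finitely many
roots `y`.
-/

namespace MvPolynomial

variable {R σ : Type*} [CommSemiring R]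

theorem constantCoeff_pderiv (i : σ) (p : MvPolynomial σ R) :
    constantCoeff (pderiv i p) = coeff (Finsupp.single i 1) p := by
  simpa [constantCoeff_eq] using coeff_pderiv p 0

theorem constantCoeff_bind₁ (g : σ → MvPolynomial σ R) (p : MvPolynomial σ R) :
    constantCoeff (bind₁ g p) = eval (fun i => constantCoeff (g i)) p := by
  induction p using MvPolynomial.induction_on with
  | C a => simp
  | add p q hp hq => simp [hp, hq]
  | mul_X p j hp => simp [hp]

theorem pderiv_bind₁_X_add_C (i : σ) (α : σ → R) (p : MvPolynomial σ R) :
    pderiv i (bind₁ (fun j => X j + C (α j)) p) = bind₁ (fun j => X j + C (α j)) (pderiv i p) := by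
  classical
  induction p using MvPolynomial.induction_on with
  | C a => simp
  | add p q hp hq => simp [hp, hq]
  | mul_X p j hp =>
    rcases eq_or_ne j i with rfl | hj
    · simp [hp, add_mul]
    · simp [hp, pderiv_X_of_ne hj]

theorem constantCoeff_bind₁_X_add_C (α : σ → R) (p : MvPolynomial σ R) :
    constantCoeff (bind₁ (fun j => X j + C (α j)) p) = eval α p := by
  simp [constantCoeff_bind₁]

theorem coeff_single_one_bind₁_X_add_C (i : σ) (α : σ → R) (p : MvPolynomial σ R) :
    coeff (Finsupp.single i 1) (bind₁ (fun j => X j + C (α j)) p) = eval α (pderiv i p) := by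
  rw [← constantCoeff_pderiv, pderiv_bind₁_X_add_C, constantCoeff_bind₁_X_add_C]

end MvPolynomial

theorem Finsupp.eq_zero_of_toLex_lt_single_last {n : ℕ} {v : Fin (n + 1) →₀ ℕ}
    (h : toLex v < toLex (Finsupp.single (Fin.last n) 1)) : v = 0 := by
  obtain ⟨j, hbefore, hj⟩ := h
  simp only [ofLex_toLex] at hbefore hj
  obtain rfl : j = Fin.last n := by
    by_contra hne
    simp [Finsupp.single_eq_of_ne hne] at hj
  ext i
  rcases (Fin.le_last i).lt_or_eq with hi | rfl
  · simpa [Finsupp.single_eq_of_ne hi.ne] using hbefore i hi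
  · simpa using hj

theorem lazardVal_eq_toLex {K : Type*} [CommRing K] {n : ℕ} {α : Fin n → K}
    {f : MvPolynomial (Fin n) K} {v : Fin n →₀ ℕ}
    (hv : coeff v (bind₁ (fun i => X i + C (α i)) f) ≠ 0)
    (hmin : ∀ w, toLex w < toLex v → coeff w (bind₁ (fun i => X i + C (α i)) f) = 0) :
    lazardVal α f = toLex v := by
  set s := (bind₁ (fun i => X i + C (α i)) f).support.image toLex
  have hmin : s.min = toLex v := by
    refine le_antisymm (Finset.min_le (Finset.mem_image_of_mem _ (mem_support_iff.mpr hv)))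
      (Finset.le_min fun w hw => ?_)
    obtain ⟨w, hws, rfl⟩ := Finset.mem_image.mp hw
    exact WithTop.coe_le_coe.mpr (not_lt.mp fun hlt => mem_support_iff.mp hws (hmin w hlt))
  rw [lazardVal, hmin]
  rfl

theorem lazardVal_eq_single_last {K : Type*} [CommRing K] {n : ℕ} {α : Fin (n + 1) → K}
    {f : MvPolynomial (Fin (n + 1)) K} (hf : eval α f = 0)
    (hdf : eval α (pderiv (Fin.last n) f) ≠ 0) :
    lazardVal α f = toLex (Finsupp.single (Fin.last n) 1) := by
  refine lazardVal_eq_toLex ?_ fun w hw => ?_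
  · rwa [coeff_single_one_bind₁_X_add_C]
  · rw [Finsupp.eq_zero_of_toLex_lt_single_last hw, ← constantCoeff_eq,
      constantCoeff_bind₁_X_add_C, hf]

namespace Polynomial

open scoped nonZeroDivisors

section FractionRing

variable {R : Type*} [CommRing R] [IsDomain R] [IsGCDMonoid R]
  {L : Type*} [Field L] [Algebra R L] [IsFractionRing R L]

theorem exists_isPrimitive_associated_map {d : L[X]} (hd : d ≠ 0) :
    ∃ D : R[X], D.IsPrimitive ∧ Associated (D.map (algebraMap R L)) d := by
  let : NormalizedGCDMonoid R := Nonempty.some inferInstance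
  obtain ⟨c, hc, hcd⟩ := IsLocalization.integerNormalization_spec R⁰ d
  set d₀ := IsLocalization.integerNormalization R⁰ d
  have hd₀ : d₀ ≠ 0 := (IsFractionRing.integerNormalization_eq_zero_iff (A := R)).not.mpr hd
  have hinj := IsFractionRing.injective R L
  have hcontent : IsUnit (C (algebraMap R L d₀.content)) :=
    isUnit_C.mpr ((map_ne_zero_iff _ hinj).mpr (content_eq_zero_iff.not.mpr hd₀)).isUnit
  have hc : IsUnit (C (algebraMap R L c)) :=
    isUnit_C.mpr ((map_ne_zero_iff _ hinj).mpr (nonZeroDivisors.ne_zero hc)).isUnit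
  have hfactor : C (algebraMap R L d₀.content) * d₀.primPart.map (algebraMap R L) =
      C (algebraMap R L c) * d := by
    rw [← map_C, ← Polynomial.map_mul, ← eq_C_content_mul_primPart, hcd, Algebra.smul_def,
      algebraMap_apply]
  refine ⟨d₀.primPart, d₀.isPrimitive_primPart, ?_⟩
  exact (associated_unit_mul_left _ _ hcontent).symm.trans
    (hfactor ▸ associated_unit_mul_left _ _ hc)

theorem IsPrimitive.squarefree_map_algebraMap {F : R[X]} (hF : F.IsPrimitive)
    (hsq : Squarefree F) : Squarefree (F.map (algebraMap R L)) := by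
  let : NormalizedGCDMonoid R := Nonempty.some inferInstance
  intro d hd
  have hd0 : d ≠ 0 := by
    rintro rfl
    exact hF.ne_zero (map_injective _ (IsFractionRing.injective R L) (by simpa using hd))
  obtain ⟨D, hDprim, hD⟩ := exists_isPrimitive_associated_map (R := R) hd0
  have hDD : D * D ∣ F := by
    refine (hDprim.mul hDprim).dvd_of_fraction_map_dvd_fraction_map (K := L) ?_
    rw [Polynomial.map_mul]
    exact (hD.mul_mul hD).dvd.trans hd
  exact hD.isUnit ((hsq D hDD).map (mapRingHom _))

end FractionRing

theorem resultant_derivative_ne_zero {R : Type*} [CommRing R] [IsDomain R]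
    [IsGCDMonoid R] [CharZero R] {F : R[X]} (hF : F.IsPrimitive) (hsq : Squarefree F) :
    F.resultant (derivative F) ≠ 0 := by
  set φ := algebraMap R (FractionRing R)
  have hinj : Function.Injective φ := IsFractionRing.injective _ _
  have : CharZero (FractionRing R) := (RingHom.charZero_iff hinj).mp inferInstance
  have hsep : (F.map φ).Separable :=
    PerfectField.separable_iff_squarefree.mpr (hF.squarefree_map_algebraMap hsq)
  rw [← map_ne_zero_iff φ hinj, ← resultant_map_map, ← natDegree_map_eq_of_injective hinj,
    ← natDegree_map_eq_of_injective hinj, ← derivative_map]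
  exact resultant_ne_zero _ _ hsep

end Polynomial

namespace MvPolynomial

variable {σ : Type*} [Unique σ]

theorem eval_uniqueAlgEquiv {R : Type*} [CommSemiring R] (p : MvPolynomial σ R) (α : R) :
    (uniqueAlgEquiv R σ p).eval α = eval (fun _ => α) p :=
  eval₂_const_uniqueAlgEquiv

theorem X_sub_C_dvd_of_eval_const_eq_zero {R : Type*} [CommRing R] {p : MvPolynomial σ R}
    {α : R} (h : eval (fun _ => α) p = 0) : X default - C α ∣ p := by
  have hX : uniqueAlgEquiv R σ (X default - C α) = Polynomial.X - Polynomial.C α := by simp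
  rw [← map_dvd_iff (uniqueAlgEquiv R σ), hX, Polynomial.dvd_iff_isRoot, Polynomial.IsRoot,
    eval_uniqueAlgEquiv]
  exact h

theorem finite_setOf_eval_const_eq_zero {K : Type*} [Field K] {d : MvPolynomial σ K}
    (hd : d ≠ 0) : {α : K | eval (fun _ => α) d = 0}.Finite := by
  have hd' : uniqueAlgEquiv K σ d ≠ 0 := (map_ne_zero_iff _ (AlgEquiv.injective _)).mpr hd
  refine (Polynomial.finite_setOfPred_isRoot hd').subset fun α hα => ?_
  exact (eval_uniqueAlgEquiv d α).trans hα

theorem map_eval_const_ne_zero_of_isPrimitive {R : Type*} [CommRing R] [Nontrivial R]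
    {F : Polynomial (MvPolynomial σ R)} (hF : F.IsPrimitive) (α : R) :
    F.map (eval fun _ => α) ≠ 0 := by
  intro h
  have hdvd : Polynomial.C (X default - C α) ∣ F :=
    (Polynomial.C_dvd_iff_dvd_coeff _ _).mpr fun i =>
      X_sub_C_dvd_of_eval_const_eq_zero (by rw [← Polynomial.coeff_map, h, Polynomial.coeff_zero])
  simpa using (hF _ hdvd).map (eval fun _ => α)

end MvPolynomial

theorem finite_setOf_mem_and_eval_map_eq_zero {K : Type*} [Field K]
    {F : Polynomial (MvPolynomial (Fin 1) K)} (hF : F.IsPrimitive) {S : Set K} (hS : S.Finite) :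
    {p : Fin 2 → K | p 0 ∈ S ∧ (F.map (eval fun _ => p 0)).eval (p 1) = 0}.Finite := by
  refine ((hS.biUnion fun α _ => (Set.finite_singleton α).prod
    (Polynomial.finite_setOfPred_isRoot (map_eval_const_ne_zero_of_isPrimitive hF α))).image
    fun q : K × K => ![q.1, q.2]).subset ?_
  rintro p ⟨hp0, hp1⟩
  refine ⟨(p 0, p 1), Set.mem_biUnion hp0 ⟨rfl, hp1⟩, ?_⟩
  ext i
  fin_cases i <;> rfl

theorem Squarefree.map_mulEquiv {M N : Type*} [Monoid M] [Monoid N] (e : M ≃* N) {m : M}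
    (h : Squarefree m) : Squarefree (e m) := by
  intro d hd
  simpa using (h (e.symm d) (by simpa using map_dvd e.symm hd)).map e

section asPolyInY

variable {K : Type*} [CommRing K]

theorem squarefree_asPolyInY {f : MvPolynomial (Fin 2) K} (hf : Squarefree f) :
    Squarefree (asPolyInY f) := by
  have h : asPolyInY f =
      ((renameEquiv K (Equiv.swap 0 1)).trans (finSuccEquiv K 1)).toMulEquiv f := rfl
  exact h ▸ hf.map_mulEquiv _

theorem derivative_finSuccEquiv {n : ℕ} (p : MvPolynomial (Fin (n + 1)) K) :
    Polynomial.derivative (finSuccEquiv K n p) = finSuccEquiv K n (pderiv 0 p) := by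
  induction p using MvPolynomial.induction_on with
  | C a => simp [finSuccEquiv_apply]
  | add p q hp hq => simp [hp, hq]
  | mul_X p i hp =>
    rw [map_mul, Polynomial.derivative_mul, hp, pderiv_mul, map_add, map_mul]
    induction i using Fin.cases with
    | zero => simp [finSuccEquiv_X_zero]
    | succ j => simp [finSuccEquiv_X_succ, pderiv_X_of_ne (Fin.succ_ne_zero j)]

theorem asPolyInY_pderiv_one (f : MvPolynomial (Fin 2) K) :
    asPolyInY (pderiv 1 f) = Polynomial.derivative (asPolyInY f) := by
  rw [asPolyInY, asPolyInY, derivative_finSuccEquiv, ← pderiv_rename (Equiv.injective _)]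
  rfl

theorem eval_map_asPolyInY (p : Fin 2 → K) (f : MvPolynomial (Fin 2) K) :
    ((asPolyInY f).map (eval fun _ => p 0)).eval (p 1) = eval p f := by
  rw [asPolyInY, ← eval_eq_eval_mv_eval', eval_rename]
  congr 2
  funext i
  fin_cases i <;> rfl

end asPolyInY

theorem finite_setOf_eval_eq_zero_and_eval_pderiv_one_eq_zero {K : Type*} [Field K] [CharZero K]
    {f : MvPolynomial (Fin 2) K} (hprim : (asPolyInY f).IsPrimitive)
    (hdeg : 0 < (asPolyInY f).natDegree) (hsqf : Squarefree f) :
    {p : Fin 2 → K | eval p f = 0 ∧ eval p (pderiv 1 f) = 0}.Finite := by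
  set F := asPolyInY f
  obtain ⟨a, b, -, -, hbezout⟩ := Polynomial.exists_mul_add_mul_eq_C_resultant F
    (Polynomial.derivative F) le_rfl le_rfl (Or.inl hdeg.ne')
  have hres := Polynomial.resultant_derivative_ne_zero hprim (squarefree_asPolyInY hsqf)
  refine (finite_setOf_mem_and_eval_map_eq_zero hprim
    (finite_setOf_eval_const_eq_zero hres)).subset ?_
  rintro p ⟨hf, hdf⟩
  have hF : (F.map (eval fun _ => p 0)).eval (p 1) = 0 := by rwa [eval_map_asPolyInY]
  have hF' : ((Polynomial.derivative F).map (eval fun _ => p 0)).eval (p 1) = 0 := by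
    rwa [← asPolyInY_pderiv_one, eval_map_asPolyInY]
  refine ⟨?_, hF⟩
  simpa [hF, hF'] using (congrArg (fun G => (G.map (eval fun _ => p 0)).eval (p 1)) hbezout).symm

/-- Let `f(x,y) ∈ K[x,y]` (with `K = ℝ` or `ℂ`) be primitive of positive degree in `y`
and squarefree. Then for all but finitely many points `(α,β)` on the curve `f = 0`,
the Lazard valuation `v_{(α,β)}(f)` equals `(0,1)`. -/
theorem lazardVal_eq_zero_one_on_curve {K : Type*} [RCLike K]
    (f : MvPolynomial (Fin 2) K)
    (hprim : (asPolyInY f).IsPrimitive)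
    (hdeg : 0 < (asPolyInY f).natDegree)
    (hsqf : Squarefree f) :
    {p : Fin 2 → K | MvPolynomial.eval p f = 0 ∧
      lazardVal p f ≠ toLex (Finsupp.single 1 1)}.Finite := by
  refine (finite_setOf_eval_eq_zero_and_eval_pderiv_one_eq_zero hprim hdeg hsqf).subset ?_
  rintro p ⟨hf, hval⟩
  exact ⟨hf, not_not.mp fun hdf => hval (lazardVal_eq_single_last hf hdf)⟩
end

section
/- There exists a polynomial in three variables that is valuation-invariant but not order-invariant on a connected set: for f(x,y,z) = z² − xy and S the x-axis in ℝ³, the Lazard valuation of f at every point of S equals (0,0,2), but ord_{(0,0,0)}(f) = 2 while ord_{(α,0,0)}(f) = 1 for all α ≠ 0. -/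
/-!
Expanding `f = z² - xy` about a point `(a, 0, 0)` of the `x`-axis gives `z² - xy - a y`.
Every monomial other than `z²` involves `x` or `y`, so `z²` is lexicographically least
whatever `a` is; but for `a ≠ 0` the linear term `a y` lowers the least total degree to `1`.
-/

open MvPolynomial

/-- The order of vanishing of `f` at `α`: the least total degree of a nonzero term
in the expansion of `f` about `α`. -/
noncomputable def ordAt {K : Type*} [CommRing K] {n : ℕ}
    (α : Fin n → K) (f : MvPolynomial (Fin n) K) : ℕ :=
  (((MvPolynomial.bind₁ (fun i => X i + C (α i)) f).support.image
    (fun d => d.sum fun _ e => e)).min).untopD 0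

theorem Finset.min_image_eq_of_forall_le {ι β : Type*} [LinearOrder β] [DecidableEq β]
    {s : Finset ι} {g : ι → β} {a : ι} (ha : a ∈ s) (hle : ∀ b ∈ s, g a ≤ g b) :
    (s.image g).min = g a :=
  le_antisymm (Finset.min_le (Finset.mem_image_of_mem g ha))
    (Finset.le_min <| by simpa using fun b hb => WithTop.coe_le_coe.2 (hle b hb))

theorem Finsupp.toLex_single_lt_of_lt {ι : Type*} [LinearOrder ι] {i j : ι} (hij : i < j)
    {d : ι →₀ ℕ} (hd : ∀ k < i, d k = 0) (hi : d i ≠ 0) (m : ℕ) :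
    toLex (single j m) < toLex d :=
  Finsupp.Lex.lt_iff.2 ⟨i, fun k hk => by simp [hd k hk, single_eq_of_ne (hk.trans hij).ne],
    by simpa [single_eq_of_ne hij.ne] using Nat.pos_of_ne_zero hi⟩

section Expansion

variable {K : Type*} [CommRing K] {n : ℕ} {α : Fin n → K} {f : MvPolynomial (Fin n) K}
  {d : Fin n →₀ ℕ}

theorem lazardVal_eq_of_forall_le (hd : d ∈ (bind₁ (fun i => X i + C (α i)) f).support)
    (hle : ∀ e ∈ (bind₁ (fun i => X i + C (α i)) f).support, toLex d ≤ toLex e) :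
    lazardVal α f = toLex d := by
  rw [lazardVal, Finset.min_image_eq_of_forall_le hd hle]
  rfl

theorem ordAt_eq_of_forall_le (hd : d ∈ (bind₁ (fun i => X i + C (α i)) f).support)
    (hle : ∀ e ∈ (bind₁ (fun i => X i + C (α i)) f).support, d.degree ≤ e.degree) :
    ordAt α f = d.degree := by
  have hsum : (fun e : Fin n →₀ ℕ => e.sum fun _ k => k) = Finsupp.degree := rfl
  rw [ordAt, hsum, Finset.min_image_eq_of_forall_le hd hle]
  rfl

end Expansion

theorem bind₁_X_add_C_z_sq_sub_xy {p : Fin 3 → ℝ} (h1 : p 1 = 0) (h2 : p 2 = 0) :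
    bind₁ (fun i => X i + C (p i)) ((X 2) ^ 2 - X 0 * X 1 : MvPolynomial (Fin 3) ℝ) =
      monomial (Finsupp.single 2 2) 1 - monomial (Finsupp.single 0 1 + Finsupp.single 1 1) 1
        - monomial (Finsupp.single 1 1) (p 0) := by
  have hxy : monomial (Finsupp.single 0 1 + Finsupp.single 1 1 : Fin 3 →₀ ℕ) (1 : ℝ) =
      X 0 * X 1 := by
    rw [X, X, monomial_mul, one_mul]
  rw [← X_pow_eq_monomial, ← C_mul_X_eq_monomial, hxy]
  simp only [map_sub, map_pow, map_mul, bind₁_X_right, h1, h2, map_zero, add_zero]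
  ring

theorem mem_support_z_sq_sub_xy_sub_C_y_iff (a : ℝ) (d : Fin 3 →₀ ℕ) :
    d ∈ (monomial (Finsupp.single 2 2) 1 - monomial (Finsupp.single 0 1 + Finsupp.single 1 1) 1
        - monomial (Finsupp.single 1 1) a : MvPolynomial (Fin 3) ℝ).support ↔
      d = Finsupp.single 2 2 ∨ d = Finsupp.single 0 1 + Finsupp.single 1 1 ∨
        (d = Finsupp.single 1 1 ∧ a ≠ 0) := by
  simp only [mem_support_iff, coeff_sub, coeff_monomial]
  rcases eq_or_ne d (Finsupp.single 2 2) with rfl | h1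
  · simp [Finsupp.ext_iff, Fin.forall_fin_succ]
  rcases eq_or_ne d (Finsupp.single 0 1 + Finsupp.single 1 1) with rfl | h2
  · simp [Finsupp.ext_iff, Fin.forall_fin_succ]
  rcases eq_or_ne d (Finsupp.single 1 1) with rfl | h3
  · simp [Finsupp.ext_iff, Fin.forall_fin_succ]
  simp [h1, h2, h3, Ne.symm h1, Ne.symm h2, Ne.symm h3]

/-- For `f(x,y,z) = z² - xy` and `S` the `x`-axis in `ℝ³`: `f` is valuation-invariant
on `S` with valuation `(0,0,2)` at every point, but not order-invariant:
`ord f = 2` at the origin while `ord f = 1` at `(α,0,0)` for `α ≠ 0`. -/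
theorem valuationInvariant_not_orderInvariant_example :
    (∀ p : Fin 3 → ℝ, p 1 = 0 → p 2 = 0 →
      lazardVal p ((X 2) ^ 2 - X 0 * X 1 : MvPolynomial (Fin 3) ℝ) =
        toLex (Finsupp.single 2 2)) ∧
    ordAt (fun _ => 0) ((X 2) ^ 2 - X 0 * X 1 : MvPolynomial (Fin 3) ℝ) = 2 ∧
    (∀ α : ℝ, α ≠ 0 →
      ordAt ![α, 0, 0] ((X 2) ^ 2 - X 0 * X 1 : MvPolynomial (Fin 3) ℝ) = 1) := by
  refine ⟨fun p h1 h2 => ?_, ?_, fun a ha => ?_⟩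
  · apply lazardVal_eq_of_forall_le <;> rw [bind₁_X_add_C_z_sq_sub_xy h1 h2]
    · exact (mem_support_z_sq_sub_xy_sub_C_y_iff _ _).2 (Or.inl rfl)
    · intro e he
      rcases (mem_support_z_sq_sub_xy_sub_C_y_iff _ _).1 he with rfl | rfl | ⟨rfl, -⟩
      · exact le_rfl
      · exact (Finsupp.toLex_single_lt_of_lt (i := 0) (by decide) (by simp) (by simp) 2).le
      · exact (Finsupp.toLex_single_lt_of_lt (i := 1) (by decide)
          (fun _ hk => Finsupp.single_eq_of_ne hk.ne) (by simp) 2).le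
  · refine (ordAt_eq_of_forall_le (d := Finsupp.single 2 2) ?_ ?_).trans
      (Finsupp.degree_single _ _) <;> rw [bind₁_X_add_C_z_sq_sub_xy (p := fun _ => 0) rfl rfl]
    · exact (mem_support_z_sq_sub_xy_sub_C_y_iff _ _).2 (Or.inl rfl)
    · intro e he
      rcases (mem_support_z_sq_sub_xy_sub_C_y_iff _ _).1 he with rfl | rfl | ⟨rfl, h0⟩
      · exact le_rfl
      · simp
      · exact absurd rfl h0
  · refine (ordAt_eq_of_forall_le (d := Finsupp.single 1 1) ?_ ?_).trans
      (Finsupp.degree_single _ _) <;> rw [bind₁_X_add_C_z_sq_sub_xy (p := ![a, 0, 0]) rfl rfl]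
    · exact (mem_support_z_sq_sub_xy_sub_C_y_iff _ _).2 (Or.inr (Or.inr ⟨rfl, ha⟩))
    · intro e he
      rcases (mem_support_z_sq_sub_xy_sub_C_y_iff _ _).1 he with rfl | rfl | ⟨rfl, -⟩ <;> simp
end

section
/- Let g ∈ ℝ[x₁,…,xₙ] be nonzero, p ∈ ℝⁿ, and let V ⊂ ℕⁿ be a set containing v_p(g) with evaluator c = (c₁,…,cₙ). Then the one-variable function s ↦ g(p + (s^{c₁},…,s^{cₙ})) is not identically zero, and its order of vanishing at s = 0 equals ⟨c, v_p(g)⟩ = Σᵢ cᵢ·(v_p(g))ᵢ. -/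
open MvPolynomial

/-- `c` is an evaluator for `V ⊆ ℕⁿ`. -/
def IsEvaluator {n : ℕ} (V : Set (Fin n → ℕ)) (c : Fin n → ℕ) : Prop :=
  (∀ i, 0 < c i) ∧
  ∀ i : Fin n, (i : ℕ) + 1 < n → ∀ v ∈ V,
    1 + ∑ j ∈ Finset.univ.filter (fun j => i < j), c j * v j ≤ c i

/-- The one-variable polynomial `s ↦ g(p + (s^{c₁},…,s^{cₙ}))`. -/
noncomputable def testCurvePoly {n : ℕ} (g : MvPolynomial (Fin n) ℝ) (p : Fin n → ℝ)
    (c : Fin n → ℕ) : Polynomial ℝ :=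
  MvPolynomial.aeval (fun i => Polynomial.C (p i) + Polynomial.X ^ c i) g

/-!
Expand `g` about `p`: `g(p + y) = Σ_d a_d y^d`. Along the curve `y = (s^{c₁},…,s^{cₙ})` the
monomial `y^d` becomes `s^{⟨c,d⟩}`. The evaluator inequalities make `d ↦ ⟨c,d⟩` strictly larger
at every `d` lexicographically above `v = v_p(g)`, and `v` is the lex-least exponent, so `a_v s^{⟨c,v⟩}`
is the only term of least order and nothing cancels it.
-/

open Finset

theorem Finset.sum_univ_eq_sum_Iio_add_add_sum_Ioi {ι M : Type*} [Fintype ι] [LinearOrder ι]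
    [LocallyFiniteOrderBot ι] [LocallyFiniteOrderTop ι] [AddCommMonoid M] (f : ι → M) (i : ι) :
    ∑ j, f j = ∑ j ∈ Iio i, f j + f i + ∑ j ∈ Ioi i, f j := by
  rw [← sum_filter_add_sum_filter_not univ (· ≤ i), sum_Iio_add_eq_sum_Iic]
  congr 2 <;> ext j <;> simp

namespace IsEvaluator

variable {n : ℕ} {V : Set (Fin n → ℕ)} {c : Fin n → ℕ}

theorem one_add_sum_Ioi_le (hc : IsEvaluator V c) {v : Fin n → ℕ} (hv : v ∈ V) (i : Fin n) :
    1 + ∑ j ∈ Ioi i, c j * v j ≤ c i := by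
  rw [← filter_lt_eq_Ioi]
  by_cases hi : (i : ℕ) + 1 < n
  · exact hc.2 i hi v hv
  · have hempty : univ.filter (fun j => i < j) = ∅ :=
      filter_eq_empty_iff.mpr fun j _ hij => hi (by have := j.isLt; rw [Fin.lt_def] at hij; omega)
    simpa [hempty] using hc.1 i |>.nat_succ_le

theorem sum_mul_lt_sum_mul (hc : IsEvaluator V c) {v : Fin n → ℕ} (hv : v ∈ V) {d : Fin n → ℕ}
    (hvd : toLex v < toLex d) : ∑ i, c i * v i < ∑ i, c i * d i := by
  obtain ⟨i, hpre, hi⟩ : ∃ i, (∀ j < i, v j = d j) ∧ v i < d i := hvd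
  have hhead : ∑ j ∈ Iio i, c j * v j = ∑ j ∈ Iio i, c j * d j :=
    sum_congr rfl fun j hj => by rw [hpre j (mem_Iio.mp hj)]
  have htail := hc.one_add_sum_Ioi_le hv i
  have hstep : c i * (v i + 1) ≤ c i * d i := Nat.mul_le_mul_left _ hi
  rw [mul_add_one] at hstep
  rw [sum_univ_eq_sum_Iio_add_add_sum_Ioi _ i, sum_univ_eq_sum_Iio_add_add_sum_Ioi _ i, hhead]
  omega

end IsEvaluator

namespace MvPolynomial

theorem polynomial_eval_aeval {R σ : Type*} [CommRing R] (x : σ → Polynomial R) (s : R)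
    (g : MvPolynomial σ R) :
    Polynomial.eval s (aeval x g) = eval (fun i => (x i).eval s) g := by
  rw [← Polynomial.coe_aeval_eq_eval, ← AlgHom.comp_apply, comp_aeval]
  rfl

section WeightedSubstitution

variable {R σ : Type*} [CommSemiring R] (w : σ → ℕ)

theorem aeval_X_pow_monomial (d : σ →₀ ℕ) (a : R) :
    aeval (fun i => (Polynomial.X : Polynomial R) ^ w i) (monomial d a) =
      Polynomial.monomial (Finsupp.weight w d) a := by
  rw [aeval_monomial, Finsupp.prod, Finsupp.weight_apply, Finsupp.sum]
  simp only [← pow_mul, Finset.prod_pow_eq_pow_sum, smul_eq_mul, mul_comm,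
    Polynomial.C_mul_X_pow_eq_monomial, Polynomial.algebraMap_eq]

theorem coeff_aeval_X_pow (f : MvPolynomial σ R) (k : ℕ) :
    (aeval (fun i => (Polynomial.X : Polynomial R) ^ w i) f).coeff k =
      ∑ d ∈ f.support with Finsupp.weight w d = k, f.coeff d := by
  conv_lhs => rw [f.as_sum]
  simp only [map_sum, aeval_X_pow_monomial, Polynomial.finsetSum_coeff,
    Polynomial.coeff_monomial, Finset.sum_filter]

variable {w} {f : MvPolynomial σ R} {v : σ →₀ ℕ}

theorem coeff_aeval_X_pow_weight_of_weight_lt (hv : v ∈ f.support)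
    (hmin : ∀ d ∈ f.support, d ≠ v → Finsupp.weight w v < Finsupp.weight w d) :
    (aeval (fun i => (Polynomial.X : Polynomial R) ^ w i) f).coeff (Finsupp.weight w v) =
      f.coeff v := by
  rw [coeff_aeval_X_pow, Finset.sum_eq_single_of_mem v (by simpa using hv)]
  intro d hd hdv
  exact absurd (Finset.mem_filter.mp hd).2 (hmin d (Finset.mem_filter.mp hd).1 hdv).ne'

theorem coeff_aeval_X_pow_of_lt (hmin : ∀ d ∈ f.support, Finsupp.weight w v ≤ Finsupp.weight w d)
    {k : ℕ} (hk : k < Finsupp.weight w v) :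
    (aeval (fun i => (Polynomial.X : Polynomial R) ^ w i) f).coeff k = 0 := by
  rw [coeff_aeval_X_pow, Finset.sum_eq_zero]
  intro d hd
  obtain ⟨hdf, rfl⟩ := Finset.mem_filter.mp hd
  exact absurd (hmin d hdf) (not_le.mpr hk)

theorem aeval_X_pow_ne_zero_of_weight_lt (hv : v ∈ f.support)
    (hmin : ∀ d ∈ f.support, d ≠ v → Finsupp.weight w v < Finsupp.weight w d) :
    aeval (fun i => (Polynomial.X : Polynomial R) ^ w i) f ≠ 0 := fun h0 =>
  mem_support_iff.mp hv <| by
    rw [← coeff_aeval_X_pow_weight_of_weight_lt hv hmin, h0, Polynomial.coeff_zero]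

theorem natTrailingDegree_aeval_X_pow_of_weight_lt (hv : v ∈ f.support)
    (hmin : ∀ d ∈ f.support, d ≠ v → Finsupp.weight w v < Finsupp.weight w d) :
    (aeval (fun i => (Polynomial.X : Polynomial R) ^ w i) f).natTrailingDegree =
      Finsupp.weight w v := by
  refine le_antisymm (Polynomial.natTrailingDegree_le_of_ne_zero ?_)
    (Polynomial.le_natTrailingDegree (aeval_X_pow_ne_zero_of_weight_lt hv hmin) fun k hk => ?_)
  · rw [coeff_aeval_X_pow_weight_of_weight_lt hv hmin]
    exact mem_support_iff.mp hv
  · refine coeff_aeval_X_pow_of_lt (fun d hd => ?_) hk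
    by_cases hdv : d = v
    · rw [hdv]
    · exact (hmin d hd hdv).le

end WeightedSubstitution

section Taylor

variable {R σ : Type*} [CommRing R]

/-- The expansion of `f` about `α`: its coefficients are the `a_v` of `f = Σ a_v (x - α)^v`. -/
noncomputable def taylor (α : σ → R) (f : MvPolynomial σ R) : MvPolynomial σ R :=
  bind₁ (fun i => X i + C (α i)) f

theorem taylor_injective (α : σ → R) : Function.Injective (taylor α) :=
  Function.LeftInverse.injective (g := bind₁ fun i => X i - C (α i)) fun f => by
    simp [taylor, bind₁_bind₁]

end Taylor

end MvPolynomial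

section LazardVal

variable {K : Type*} [CommRing K] {n : ℕ} {α : Fin n → K} {f : MvPolynomial (Fin n) K}

theorem lazardVal_eq_min' (h : (taylor α f).support.Nonempty) :
    lazardVal α f = ((taylor α f).support.image toLex).min' (h.image _) := by
  change ((taylor α f).support.image toLex).min.untopD (toLex 0) = _
  rw [← Finset.coe_min' (h.image _)]
  rfl

theorem ofLex_lazardVal_mem_support (hf : f ≠ 0) :
    ofLex (lazardVal α f) ∈ (taylor α f).support := by
  have h : (taylor α f).support.Nonempty :=
    support_nonempty.mpr ((map_ne_zero_iff _ (taylor_injective α)).mpr hf)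
  obtain ⟨d, hd, hdv⟩ := Finset.mem_image.mp (Finset.min'_mem _ (h.image toLex))
  rwa [lazardVal_eq_min' h, ← hdv]

theorem lazardVal_le {d : Fin n →₀ ℕ} (hd : d ∈ (taylor α f).support) :
    lazardVal α f ≤ toLex d := by
  rw [lazardVal_eq_min' ⟨d, hd⟩]
  exact Finset.min'_le _ _ (Finset.mem_image_of_mem _ hd)

end LazardVal

theorem IsEvaluator.weight_lazardVal_lt {K : Type*} [CommRing K] {n : ℕ}
    {g : MvPolynomial (Fin n) K} {p : Fin n → K}
    {V : Set (Fin n → ℕ)} {c : Fin n → ℕ} (hc : IsEvaluator V c)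
    (hV : (fun i => ofLex (lazardVal p g) i) ∈ V) {d : Fin n →₀ ℕ}
    (hd : d ∈ (taylor p g).support) (hdv : d ≠ ofLex (lazardVal p g)) :
    Finsupp.weight c (ofLex (lazardVal p g)) < Finsupp.weight c d := by
  have hlt : lazardVal p g < toLex d :=
    (lazardVal_le hd).lt_of_ne fun h => hdv (by rw [h]; rfl)
  simpa only [Finsupp.weight_eq_sum, smul_eq_mul, mul_comm] using
    hc.sum_mul_lt_sum_mul (d := d) hV hlt

theorem eval_testCurvePoly {n : ℕ} (g : MvPolynomial (Fin n) ℝ) (p : Fin n → ℝ) (c : Fin n → ℕ)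
    (s : ℝ) : Polynomial.eval s (testCurvePoly g p c) = eval (fun i => p i + s ^ c i) g := by
  simp [testCurvePoly, polynomial_eval_aeval]

theorem testCurvePoly_eq_aeval_taylor {n : ℕ} (g : MvPolynomial (Fin n) ℝ) (p : Fin n → ℝ)
    (c : Fin n → ℕ) :
    testCurvePoly g p c = aeval (fun i => Polynomial.X ^ c i) (taylor p g) := by
  rw [testCurvePoly, taylor, aeval_bind₁]
  congr
  funext i
  simp [add_comm]

/-- Let `g ∈ ℝ[x₁,…,xₙ]` be nonzero, `p ∈ ℝⁿ`, `V ⊆ ℕⁿ` containing `v_p(g)`, and `c`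
an evaluator for `V`. Then `s ↦ g(p + (s^{c₁},…,s^{cₙ}))` is not identically zero and
its order of vanishing at `s = 0` equals `⟨c, v_p(g)⟩ = Σᵢ cᵢ·(v_p(g))ᵢ`. -/
theorem order_along_test_curve {n : ℕ} (g : MvPolynomial (Fin n) ℝ) (hg : g ≠ 0)
    (p : Fin n → ℝ) (V : Set (Fin n → ℕ)) (c : Fin n → ℕ)
    (hV : (fun i => ofLex (lazardVal p g) i) ∈ V) (hc : IsEvaluator V c) :
    (∀ s : ℝ, Polynomial.eval s (testCurvePoly g p c) =
      MvPolynomial.eval (fun i => p i + s ^ c i) g) ∧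
    testCurvePoly g p c ≠ 0 ∧
    Polynomial.rootMultiplicity 0 (testCurvePoly g p c) =
      ∑ i, c i * ofLex (lazardVal p g) i := by
  have hv := ofLex_lazardVal_mem_support (α := p) hg
  have hmin := fun d => hc.weight_lazardVal_lt hV (d := d)
  refine ⟨eval_testCurvePoly g p c, ?_, ?_⟩
  · rw [testCurvePoly_eq_aeval_taylor]
    exact aeval_X_pow_ne_zero_of_weight_lt hv hmin
  · rw [Polynomial.rootMultiplicity_eq_natTrailingDegree', testCurvePoly_eq_aeval_taylor,
      natTrailingDegree_aeval_X_pow_of_weight_lt hv hmin, Finsupp.weight_eq_sum]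
    simp only [smul_eq_mul, mul_comm]
end
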